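/- Let d ≥ 1, let ε₀ and χ be real numbers, let ρ, p : ℝ × ℝ^d → ℝ and v : ℝ × ℝ^d → ℝ^d be continuously differentiable, and let φ : ℝ × ℝ^d → ℝ be twice continuously differentiable in the spatial variables. Define E := −∇φ (spatial gradient), the stress tensor σ := −p 1 − (1/2) ε₀ χ |E|² 1 + ε₀ χ (E ⊗ E), the Lorentz force density k := n^e E with total charge density n^e := ε₀ div E, and the free charge density n^F := −ε₀ (1+χ) Δφ. Then the momentum balance ∂(ρv)/∂t + div(ρ v ⊗ v − σ) = k holds componentwise at a point if and only if ∂(ρv)/∂t + div(ρ v ⊗ v) + ∇p = −n^F ∇φ holds there. -/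

import Mathlib

open scoped BigOperators

/-- Time derivative `∂f/∂t` of a scalar field on `ℝ × ℝ^d`. -/
noncomputable def timeDeriv {d : ℕ} (f : ℝ × (Fin d → ℝ) → ℝ) (p : ℝ × (Fin d → ℝ)) : ℝ :=
  fderiv ℝ f p (1, 0)

/-- Spatial partial derivative `∂f/∂x_i` of a scalar field on `ℝ × ℝ^d`
(derivative of the time-slice). -/
noncomputable def sderiv' {d : ℕ} (i : Fin d) (f : ℝ × (Fin d → ℝ) → ℝ)
    (p : ℝ × (Fin d → ℝ)) : ℝ :=
  fderiv ℝ (fun y => f (p.1, y)) p.2 (Pi.single i 1)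

section Helpers

variable {X : Type*} [NormedAddCommGroup X] [NormedSpace ℝ X] {F G : X → ℝ} {x : X}

lemma Dmul' (hF : DifferentiableAt ℝ F x) (hG : DifferentiableAt ℝ G x) (w : X) :
    fderiv ℝ (fun y => F y * G y) x w
      = fderiv ℝ F x w * G x + F x * fderiv ℝ G x w := by
  rw [fderiv_fun_mul hF hG]
  simp only [ContinuousLinearMap.add_apply, ContinuousLinearMap.smul_apply, smul_eq_mul]
  ring

lemma Dconstmul' (c : ℝ) (hF : DifferentiableAt ℝ F x) (w : X) :
    fderiv ℝ (fun y => c * F y) x w = c * fderiv ℝ F x w := by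
  rw [fderiv_const_mul hF]; simp

lemma Dmulconst' (c : ℝ) (hF : DifferentiableAt ℝ F x) (w : X) :
    fderiv ℝ (fun y => F y * c) x w = fderiv ℝ F x w * c := by
  rw [fderiv_mul_const hF]; simp [mul_comm]

lemma Dneg' (w : X) : fderiv ℝ (fun y => -F y) x w = -fderiv ℝ F x w := by
  rw [fderiv_fun_neg]; simp

lemma Dsub' (hF : DifferentiableAt ℝ F x) (hG : DifferentiableAt ℝ G x) (w : X) :
    fderiv ℝ (fun y => F y - G y) x w = fderiv ℝ F x w - fderiv ℝ G x w := by
  rw [fderiv_fun_sub hF hG]; simp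

lemma Dadd' (hF : DifferentiableAt ℝ F x) (hG : DifferentiableAt ℝ G x) (w : X) :
    fderiv ℝ (fun y => F y + G y) x w = fderiv ℝ F x w + fderiv ℝ G x w := by
  rw [fderiv_fun_add hF hG]; simp

lemma Dsum' {ι : Type*} (s : Finset ι) (A : ι → X → ℝ)
    (h : ∀ i ∈ s, DifferentiableAt ℝ (A i) x) (w : X) :
    fderiv ℝ (fun y => ∑ i ∈ s, A i y) x w = ∑ i ∈ s, fderiv ℝ (A i) x w := by
  rw [fderiv_fun_sum h]; simp

end Helpers

/-- with stress tensor `σ = −p 1 − (1/2)ε₀χ|E|²1 + ε₀χ (E⊗E)`,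
Lorentz force density `k = n^e E`, `n^e = ε₀ div E`, `E = −∇φ` and
`n^F = −ε₀(1+χ)Δφ`, the momentum balance
`∂(ρv)/∂t + div(ρ v ⊗ v − σ) = k` holds componentwise at a point iff
`∂(ρv)/∂t + div(ρ v ⊗ v) + ∇p = −n^F ∇φ` holds there. -/
theorem momentum_balance_equivalence {d : ℕ} (hd : 1 ≤ d) (ε₀ χ : ℝ)
    (ρ p : ℝ × (Fin d → ℝ) → ℝ) (v : ℝ × (Fin d → ℝ) → (Fin d → ℝ))
    (φ : ℝ × (Fin d → ℝ) → ℝ)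
    (hρ : ContDiff ℝ 1 ρ) (hp : ContDiff ℝ 1 p) (hv : ContDiff ℝ 1 v)
    (hφ : ∀ t, ContDiff ℝ 2 (fun x => φ (t, x)))
    (E : Fin d → ℝ × (Fin d → ℝ) → ℝ)
    (hE : ∀ i q, E i q = -sderiv' i φ q)
    (σ : Fin d → Fin d → ℝ × (Fin d → ℝ) → ℝ)
    (hσ : ∀ i j q, σ i j q =
      -p q * (if i = j then 1 else 0)
        - (1 / 2) * ε₀ * χ * (∑ l, E l q ^ 2) * (if i = j then 1 else 0)
        + ε₀ * χ * (E i q * E j q))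
    (ne' : ℝ × (Fin d → ℝ) → ℝ)
    (hne : ∀ q, ne' q = ε₀ * ∑ j, sderiv' j (E j) q)
    (k : Fin d → ℝ × (Fin d → ℝ) → ℝ)
    (hk : ∀ i q, k i q = ne' q * E i q)
    (nF : ℝ × (Fin d → ℝ) → ℝ)
    (hnF : ∀ q, nF q = -(ε₀ * (1 + χ)) * ∑ j, sderiv' j (fun r => sderiv' j φ r) q)
    (q₀ : ℝ × (Fin d → ℝ)) :
    (∀ i, timeDeriv (fun r => ρ r * v r i) q₀
        + ∑ j, sderiv' j (fun r => ρ r * v r i * v r j - σ i j r) q₀ = k i q₀)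
    ↔ (∀ i, timeDeriv (fun r => ρ r * v r i) q₀
        + ∑ j, sderiv' j (fun r => ρ r * v r i * v r j) q₀ + sderiv' i p q₀
        = -nF q₀ * sderiv' i φ q₀) := by
  classical
  obtain ⟨t, x⟩ := q₀
  -- spatial slice of φ and its derivatives
  set f : (Fin d → ℝ) → ℝ := fun y => φ (t, y) with hfdef
  have hf2 : ContDiff ℝ 2 f := hφ t
  have hf' : ContDiff ℝ 1 (fderiv ℝ f) := hf2.fderiv_right (by norm_num)
  have hf'd : Differentiable ℝ (fderiv ℝ f) := hf'.differentiable one_ne_zero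
  set e : Fin d → (Fin d → ℝ) := fun j => (Pi.single j 1 : Fin d → ℝ) with he
  set H : Fin d → Fin d → ℝ := fun u w => fderiv ℝ (fderiv ℝ f) x (e u) (e w) with hHdef
  have hsymm : ∀ u w, H u w = H w u := by
    intro u w
    exact (hf2.contDiffAt.isSymmSndFDerivAt (by simp)) (e u) (e w)
  -- slices of p, ρ, v
  have hι : Differentiable ℝ (fun y : Fin d → ℝ => ((t, y) : ℝ × (Fin d → ℝ))) :=
    (differentiable_const t).prodMk differentiable_id
  set P : (Fin d → ℝ) → ℝ := fun y => p (t, y) with hPdef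
  have hPd : Differentiable ℝ P := (hp.differentiable one_ne_zero).comp hι
  have hRd : Differentiable ℝ (fun y => ρ (t, y)) := (hρ.differentiable one_ne_zero).comp hι
  have hVd : ∀ i, Differentiable ℝ (fun y => v (t, y) i) := by
    intro i
    have hvv : Differentiable ℝ (fun y => v (t, y)) := (hv.differentiable one_ne_zero).comp hι
    exact differentiable_pi.mp hvv i
  -- the derivative of φ slice
  set g : Fin d → (Fin d → ℝ) → ℝ := fun l y => fderiv ℝ f y (e l) with hgdef
  have hgd : ∀ l, Differentiable ℝ (g l) := fun l => hf'd.clm_apply (differentiable_const _)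
  have hgD : ∀ l (w : Fin d → ℝ), fderiv ℝ (g l) x w = fderiv ℝ (fderiv ℝ f) x w (e l) := by
    intro l w
    show fderiv ℝ (fun y => fderiv ℝ f y (e l)) x w = _
    rw [fderiv_clm_apply (hf'd x) (differentiableAt_const _)]
    simp
  -- slices of E
  have hEs : ∀ l, (fun y => E l (t, y)) = fun y => -g l y := by
    intro l; funext y; rw [hE]; rfl
  set a : Fin d → ℝ := fun l => -g l x with hadef
  have hEx : ∀ l, E l (t, x) = a l := by
    intro l; rw [hE]; rfl
  have hEdiff : ∀ l, Differentiable ℝ (fun y => E l (t, y)) := by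
    intro l; rw [hEs l]; exact (hgd l).neg
  have hED : ∀ l (w : Fin d → ℝ),
      fderiv ℝ (fun y => E l (t, y)) x w = -(fderiv ℝ (fderiv ℝ f) x w (e l)) := by
    intro l w
    rw [hEs l, Dneg' w, hgD]
  -- sderiv' at (t, x) is the sliced fderiv
  have hsd : ∀ (jj : Fin d) (F : ℝ × (Fin d → ℝ) → ℝ),
      sderiv' jj F (t, x) = fderiv ℝ (fun y => F (t, y)) x (e jj) := fun _ _ => rfl
  -- values of various sderiv' at (t,x)
  have hdivE : ∀ j, sderiv' j (E j) (t, x) = -(H j j) := by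
    intro j; rw [hsd, hED]
  have hφ2 : ∀ j, sderiv' j (fun r => sderiv' j φ r) (t, x) = H j j := by
    intro j
    rw [hsd]
    have hq : (fun y => sderiv' j φ (t, y)) = g j := rfl
    rw [hq, hgD]
  have hφ1 : ∀ i, sderiv' i φ (t, x) = -(a i) := by
    intro i
    rw [hsd]
    show g i x = -(a i)
    simp [hadef]
  have hpD : ∀ i, sderiv' i p (t, x) = fderiv ℝ P x (e i) := fun i => hsd i p
  -- differentiability of various slices
  have hsafe : ∀ l, DifferentiableAt ℝ (fun y => E l (t, y)) x := fun l => (hEdiff l) x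
  have hSd : DifferentiableAt ℝ (fun y => ∑ l, E l (t, y) ^ 2) x := by
    apply DifferentiableAt.fun_sum
    intro l _
    exact (hsafe l).pow 2
  have hσslice : ∀ i j, (fun y => σ i j (t, y)) =
      fun y => -p (t, y) * (if i = j then 1 else 0)
        - (1 / 2) * ε₀ * χ * (∑ l, E l (t, y) ^ 2) * (if i = j then 1 else 0)
        + ε₀ * χ * (E i (t, y) * E j (t, y)) := by
    intro i j; funext y; rw [hσ]
  have hσd : ∀ i j, DifferentiableAt ℝ (fun y => σ i j (t, y)) x := by
    intro i j
    rw [hσslice]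
    apply DifferentiableAt.add
    · apply DifferentiableAt.sub
      · exact ((hPd x).neg.mul_const _)
      · exact (((differentiableAt_const _).mul hSd).mul_const _)
    · exact (differentiableAt_const _).mul ((hsafe i).mul (hsafe j))
  -- derivative of squares
  have hsqD : ∀ l (w : Fin d → ℝ),
      fderiv ℝ (fun y => E l (t, y) ^ 2) x w
        = -(fderiv ℝ (fderiv ℝ f) x w (e l)) * a l + a l * -(fderiv ℝ (fderiv ℝ f) x w (e l)) := by
    intro l w
    have hq : (fun y => E l (t, y) ^ 2) = fun y => E l (t, y) * E l (t, y) := by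
      funext y; ring
    rw [hq, Dmul' (hsafe l) (hsafe l) w, hED, hEx]
  -- the derivative of the stress slice
  have hσD : ∀ i j, sderiv' j (σ i j) (t, x) =
      (-(fderiv ℝ P x (e j))) * (if i = j then 1 else 0)
      - ((1 / 2) * ε₀ * χ * (∑ l, (-(H j l) * a l + a l * -(H j l)))) * (if i = j then 1 else 0)
      + ε₀ * χ * (-(H j i) * a j + a i * -(H j j)) := by
    intro i j
    rw [hsd, hσslice]
    rw [Dadd' (((hPd x).fun_neg.mul_const _).fun_sub (((differentiableAt_const _).fun_mul hSd).mul_const _))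
      ((differentiableAt_const _).fun_mul ((hsafe i).fun_mul (hsafe j))) (e j)]
    rw [Dsub' ((hPd x).fun_neg.mul_const _) (((differentiableAt_const _).fun_mul hSd).mul_const _) (e j)]
    rw [Dmulconst' _ (hPd x).fun_neg (e j), Dneg' (e j)]
    rw [Dmulconst' _ ((differentiableAt_const _).fun_mul hSd) (e j)]
    rw [Dconstmul' _ hSd (e j)]
    rw [Dconstmul' _ ((hsafe i).fun_mul (hsafe j)) (e j)]
    rw [Dmul' (hsafe i) (hsafe j) (e j), hED, hED, hEx, hEx]
    rw [Dsum' Finset.univ (fun l y => E l (t, y) ^ 2) (fun l _ => (hsafe l).pow 2) (e j)]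
    simp only [hsqD]
    rfl
  -- sum of stress derivatives
  have hsum_sig : ∀ i, ∑ j, sderiv' j (σ i j) (t, x)
      = -(fderiv ℝ P x (e i)) - ε₀ * χ * (a i * ∑ j, H j j) := by
    intro i
    have expand : ∀ j, sderiv' j (σ i j) (t, x) =
        (if i = j then (-(fderiv ℝ P x (e j))
          - ((1 / 2) * ε₀ * χ * (∑ l, (-(H j l) * a l + a l * -(H j l))))) else 0)
        + ε₀ * χ * (-(H j i) * a j + a i * -(H j j)) := by
      intro j
      rw [hσD]
      by_cases hij : i = j <;> simp [hij] <;> try ring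
    simp only [expand]
    rw [Finset.sum_add_distrib, Finset.sum_ite_eq, if_pos (Finset.mem_univ i)]
    have hS1 : (∑ l, (-(H i l) * a l + a l * -(H i l))) = -(2 * ∑ l, H i l * a l) := by
      rw [show (∑ l, (-(H i l) * a l + a l * -(H i l)))
          = ∑ l, (-2) * (H i l * a l) from Finset.sum_congr rfl fun l _ => by ring,
        ← Finset.mul_sum]
      ring
    have hS2 : (∑ j, ε₀ * χ * (-(H j i) * a j + a i * -(H j j)))
        = ε₀ * χ * ((-(∑ j, H i j * a j)) + a i * (-(∑ j, H j j))) := by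
      rw [← Finset.mul_sum]
      congr 1
      rw [show (∑ j, (-(H j i) * a j + a i * -(H j j)))
          = ∑ j, ((-(H i j * a j)) + a i * (-(H j j))) from
          Finset.sum_congr rfl fun j _ => by rw [hsymm j i]; ring]
      rw [Finset.sum_add_distrib, Finset.sum_neg_distrib, ← Finset.mul_sum,
        Finset.sum_neg_distrib]
    rw [hS1, hS2]
    ring
  -- split the divergence of ρ v ⊗ v − σ
  have hMd : ∀ i j, DifferentiableAt ℝ (fun y => ρ (t, y) * v (t, y) i * v (t, y) j) x :=
    fun i j => ((hRd x).mul (hVd i x)).mul (hVd j x)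
  have hsplit : ∀ i j, sderiv' j (fun r => ρ r * v r i * v r j - σ i j r) (t, x)
      = sderiv' j (fun r => ρ r * v r i * v r j) (t, x) - sderiv' j (σ i j) (t, x) := by
    intro i j
    rw [hsd, hsd, hsd]
    exact Dsub' (hMd i j) (hσd i j) (e j)
  -- assemble
  have main : ∀ i : Fin d,
      (timeDeriv (fun r => ρ r * v r i) (t, x)
        + ∑ j, sderiv' j (fun r => ρ r * v r i * v r j - σ i j r) (t, x) = k i (t, x))
      ↔ (timeDeriv (fun r => ρ r * v r i) (t, x)
        + ∑ j, sderiv' j (fun r => ρ r * v r i * v r j) (t, x) + sderiv' i p (t, x)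
        = -nF (t, x) * sderiv' i φ (t, x)) := by
    intro i
    have e1 : ∑ j, sderiv' j (fun r => ρ r * v r i * v r j - σ i j r) (t, x)
        = ∑ j, sderiv' j (fun r => ρ r * v r i * v r j) (t, x)
          - (-(fderiv ℝ P x (e i)) - ε₀ * χ * (a i * ∑ j, H j j)) := by
      rw [← hsum_sig, ← Finset.sum_sub_distrib]
      exact Finset.sum_congr rfl fun j _ => hsplit i j
    have e2 : k i (t, x) = ε₀ * (-(∑ j, H j j)) * a i := by
      rw [hk, hne, hEx]
      congr 2
      rw [show (∑ j, sderiv' j (E j) (t, x)) = ∑ j, -(H j j) from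
        Finset.sum_congr rfl fun j _ => hdivE j, Finset.sum_neg_distrib]
    have e3 : nF (t, x) = -(ε₀ * (1 + χ)) * ∑ j, H j j := by
      rw [hnF]
      congr 1
      exact Finset.sum_congr rfl fun j _ => hφ2 j
    rw [e1, e2, e3, hφ1 i, hpD i]
    constructor
    · intro h
      linear_combination h
    · intro h
      linear_combination h
  exact forall_congr' main
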